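/- Two separated terms t[s_x/x] (x ∈ X) and t'[s'_{x'}/x'] (x' ∈ X') in a theory U containing theories S and T are equal modulo (T,S) (i.e., there exist functions f1 : X → Y, f2 : X' → Y and a family of S-terms s̄_y with t[f1(x)/x] =_T t'[f2(x')/x'], s_x =_S s̄_{f1(x)}, and s'_{x'} =_S s̄_{f2(x')}) if and only if there exist functions g1 : X → Z and g2 : X' → Z such that (a) t[g1(x)/x] =_T t'[g2(x')/x'], (b) g1(x1) = g1(x2) ⟺ s_{x1} =_S s_{x2}, (c) g2(x'_1) = g2(x'_2) ⟺ s'_{x'_1} =_S s'_{x'_2}, and (d) g1(x) = g2(x') ⟺ s_x =_S s'_{x'}. -/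
import Mathlib


/-! ## Algebraic theories, equational logic, and composite theories (Pirog–Staton) -/

/-- An algebraic signature: a set of operation symbols with arities. -/
structure Sig : Type 1 where
  ops : Type
  ar : ops → ℕ

/-- Terms over a signature with variables in `X`. -/
inductive Tm (σ : Sig) (X : Type) : Type
  | var : X → Tm σ X
  | op : (g : σ.ops) → (Fin (σ.ar g) → Tm σ X) → Tm σ X

/-- Simultaneous substitution of terms for variables. -/
def Tm.bind {σ : Sig} {X Y : Type} : Tm σ X → (X → Tm σ Y) → Tm σ Y
  | .var x, f => f x
  | .op g a, f => .op g fun i => (a i).bind f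

/-- Substitution of variables for variables (renaming). -/
def Tm.rename {σ : Sig} {X Y : Type} (t : Tm σ X) (f : X → Y) : Tm σ Y :=
  t.bind fun x => .var (f x)

/-- The set of variables occurring in a term. -/
def Tm.vars {σ : Sig} {X : Type} : Tm σ X → Set X
  | .var x => {x}
  | .op _ a => ⋃ i, (a i).vars

/-- An algebraic theory: a signature together with a set of equations
(pairs of terms over natural-number variables). -/
structure Theory : Type 1 where
  sig : Sig
  axioms : Tm sig ℕ → Tm sig ℕ → Prop

/-- Provable equality in equational logic from the axioms of a theory. -/
inductive Theory.Eq (Th : Theory) : {X : Type} → Tm Th.sig X → Tm Th.sig X → Prop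
  | ax {X : Type} {l r : Tm Th.sig ℕ} (h : Th.axioms l r) (f : ℕ → Tm Th.sig X) :
      Theory.Eq Th (l.bind f) (r.bind f)
  | refl {X : Type} (t : Tm Th.sig X) : Theory.Eq Th t t
  | symm {X : Type} {a b : Tm Th.sig X} : Theory.Eq Th a b → Theory.Eq Th b a
  | trans {X : Type} {a b c : Tm Th.sig X} :
      Theory.Eq Th a b → Theory.Eq Th b c → Theory.Eq Th a c
  | congr {X : Type} (g : Th.sig.ops) {a b : Fin (Th.sig.ar g) → Tm Th.sig X}
      (h : ∀ i, Theory.Eq Th (a i) (b i)) : Theory.Eq Th (.op g a) (.op g b)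

/-- A theory is consistent if distinct variables are not provably equal. -/
def Theory.Consistent (Th : Theory) : Prop :=
  ∀ x y : ℕ, Th.Eq (X := ℕ) (.var x) (.var y) → x = y

/-- Disjoint union of signatures. -/
def Sig.sum (σ τ : Sig) : Sig := ⟨σ.ops ⊕ τ.ops, Sum.elim σ.ar τ.ar⟩

/-- Embedding of terms of the left signature into the sum. -/
def Tm.inL {σ τ : Sig} {X : Type} : Tm σ X → Tm (σ.sum τ) X
  | .var x => .var x
  | .op g a => .op (Sum.inl g) fun i => Tm.inL (a i)

/-- Embedding of terms of the right signature into the sum. -/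
def Tm.inR {σ τ : Sig} {X : Type} : Tm τ X → Tm (σ.sum τ) X
  | .var x => .var x
  | .op g a => .op (Sum.inr g) fun i => Tm.inR (a i)

/-- A separated term `t[s_x/x]`: a `τ`-term `t` whose variables are substituted
by `σ`-terms `s x`. -/
def sep {σ τ : Sig} {X : Type} (t : Tm τ X) (s : X → Tm σ ℕ) : Tm (σ.sum τ) ℕ :=
  (Tm.inR t).bind fun x => Tm.inL (s x)

/-- Equality modulo `(T, S)` of two separated terms, in the sense of Pirog and Staton. -/
def EqMod (S T : Theory) {X X' : Type}
    (t : Tm T.sig X) (s : X → Tm S.sig ℕ)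
    (t' : Tm T.sig X') (s' : X' → Tm S.sig ℕ) : Prop :=
  ∃ (Y : Type) (f₁ : X → Y) (f₂ : X' → Y) (sb : Y → Tm S.sig ℕ),
    T.Eq (t.rename f₁) (t'.rename f₂) ∧
    (∀ x, S.Eq (s x) (sb (f₁ x))) ∧
    (∀ x', S.Eq (s' x') (sb (f₂ x')))

/-- A composite theory of `T` after `S`: a theory on the disjoint union of the
signatures, containing both `S` and `T`, in which every term is provably equal to
a separated term (a `T`-term of `S`-terms), essentially uniquely. -/
structure Composite (S T : Theory) where
  axioms : Tm (S.sig.sum T.sig) ℕ → Tm (S.sig.sum T.sig) ℕ → Prop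
  containsS : ∀ {X : Type} (a b : Tm S.sig X), S.Eq a b →
    Theory.Eq ⟨S.sig.sum T.sig, axioms⟩ (Tm.inL a) (Tm.inL b)
  containsT : ∀ {X : Type} (a b : Tm T.sig X), T.Eq a b →
    Theory.Eq ⟨S.sig.sum T.sig, axioms⟩ (Tm.inR a) (Tm.inR b)
  separation : ∀ u : Tm (S.sig.sum T.sig) ℕ,
    ∃ (X : Type) (t : Tm T.sig X) (s : X → Tm S.sig ℕ),
      Theory.Eq ⟨S.sig.sum T.sig, axioms⟩ u (sep t s)
  essentiallyUnique : ∀ {X X' : Type} (t : Tm T.sig X) (s : X → Tm S.sig ℕ)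
      (t' : Tm T.sig X') (s' : X' → Tm S.sig ℕ),
      Theory.Eq ⟨S.sig.sum T.sig, axioms⟩ (sep t s) (sep t' s') →
      EqMod S T t s t' s'

/-- The underlying theory of a composite. -/
def Composite.theory {S T : Theory} (C : Composite S T) : Theory :=
  ⟨S.sig.sum T.sig, C.axioms⟩

/-- A set of terms is stable if it is closed under renaming of variables. -/
def Stable {σ : Sig} (Ts : Set (Tm σ ℕ)) : Prop :=
  ∀ t ∈ Ts, ∀ f : ℕ → ℕ, t.rename f ∈ Ts

/-- A set of terms is universal if every term is provably equal to one in the set. -/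
def Universal (Th : Theory) (Ts : Set (Tm Th.sig ℕ)) : Prop :=
  ∀ t : Tm Th.sig ℕ, ∃ t' ∈ Ts, Th.Eq t t'

/-- Apply a binary term (a term with variables among `0` and `1`) to two arguments. -/
def subst2 {σ : Sig} {X : Type} (b : Tm σ ℕ) (t u : Tm σ X) : Tm σ X :=
  b.bind fun i => if i = 0 then t else u

lemma Tm.bind_bind {σ : Sig} {X Y Z : Type} (t : Tm σ X) (f : X → Tm σ Y)
    (g : Y → Tm σ Z) : (t.bind f).bind g = t.bind fun x => (f x).bind g := by
  induction t with
  | var x => rfl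
  | op o a ih => simp [Tm.bind, ih]

lemma Theory.Eq.bind {Th : Theory} {X Y : Type} {a b : Tm Th.sig X}
    (h : Th.Eq a b) (f : X → Tm Th.sig Y) : Th.Eq (a.bind f) (b.bind f) := by
  induction h with
  | ax hax g => rw [Tm.bind_bind, Tm.bind_bind]; exact Theory.Eq.ax hax _
  | refl t => exact Theory.Eq.refl _
  | symm _ ih => exact ih.symm
  | trans _ _ ih1 ih2 => exact ih1.trans ih2
  | congr g _ ih => exact Theory.Eq.congr g fun i => ih i

lemma Theory.Eq.rename {Th : Theory} {X Y : Type} {a b : Tm Th.sig X}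
    (h : Th.Eq a b) (f : X → Y) : Th.Eq (a.rename f) (b.rename f) :=
  h.bind _

/-- Setoid of S-terms modulo provable equality. -/
def eqSetoid (S : Theory) : Setoid (Tm S.sig ℕ) where
  r a b := S.Eq a b
  iseqv := ⟨Theory.Eq.refl, Theory.Eq.symm, Theory.Eq.trans⟩

/-- Two separated terms are equal modulo `(T, S)` iff there exist
functions `g₁, g₂` into a common variable set satisfying the four conditions of
Theorem 2.8. -/
theorem eqMod_iff (S T : Theory) {X X' : Type}
    (t : Tm T.sig X) (s : X → Tm S.sig ℕ) (t' : Tm T.sig X') (s' : X' → Tm S.sig ℕ) :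
    EqMod S T t s t' s' ↔
      ∃ (Z : Type) (g₁ : X → Z) (g₂ : X' → Z),
        T.Eq (t.rename g₁) (t'.rename g₂) ∧
        (∀ x₁ x₂, g₁ x₁ = g₁ x₂ ↔ S.Eq (s x₁) (s x₂)) ∧
        (∀ x₁ x₂, g₂ x₁ = g₂ x₂ ↔ S.Eq (s' x₁) (s' x₂)) ∧
        (∀ x x', g₁ x = g₂ x' ↔ S.Eq (s x) (s' x')) := by
  constructor
  · rintro ⟨Y, f₁, f₂, sb, hT, hs, hs'⟩
    refine ⟨Quotient (eqSetoid S), fun x => ⟦s x⟧, fun x' => ⟦s' x'⟧, ?_, ?_, ?_, ?_⟩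
    · have hq1 : ∀ x : X, (⟦s x⟧ : Quotient (eqSetoid S)) = ⟦sb (f₁ x)⟧ :=
        fun x => Quotient.sound (hs x)
      have hq2 : ∀ x' : X', (⟦s' x'⟧ : Quotient (eqSetoid S)) = ⟦sb (f₂ x')⟧ :=
        fun x' => Quotient.sound (hs' x')
      have e1 : t.rename (fun x => (⟦s x⟧ : Quotient (eqSetoid S)))
          = (t.rename f₁).rename (fun y => ⟦sb y⟧) := by
        simp only [Tm.rename, Tm.bind_bind]
        congr 1; funext x; simp [Tm.bind, hq1 x]
      have e2 : t'.rename (fun x' => (⟦s' x'⟧ : Quotient (eqSetoid S)))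
          = (t'.rename f₂).rename (fun y => ⟦sb y⟧) := by
        simp only [Tm.rename, Tm.bind_bind]
        congr 1; funext x'; simp [Tm.bind, hq2 x']
      rw [e1, e2]
      exact hT.rename _
    · exact fun x₁ x₂ => ⟨fun h => Quotient.exact h, fun h => Quotient.sound h⟩
    · exact fun x₁ x₂ => ⟨fun h => Quotient.exact h, fun h => Quotient.sound h⟩
    · exact fun x x' => ⟨fun h => Quotient.exact h, fun h => Quotient.sound h⟩
  · rintro ⟨Z, g₁, g₂, hT, hb, hc, hd⟩
    classical
    refine ⟨Z, g₁, g₂, fun z =>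
      if h : ∃ x, g₁ x = z then s h.choose
      else if h' : ∃ x', g₂ x' = z then s' h'.choose
      else .var 0, hT, ?_, ?_⟩
    · intro x
      have h : ∃ x₀, g₁ x₀ = g₁ x := ⟨x, rfl⟩
      simp only [dif_pos h]
      exact ((hb _ _).mp h.choose_spec).symm
    · intro x'
      by_cases h : ∃ x₀, g₁ x₀ = g₂ x'
      · simp only [dif_pos h]
        exact ((hd _ _).mp h.choose_spec).symm
      · have h' : ∃ x₀, g₂ x₀ = g₂ x' := ⟨x', rfl⟩
        simp only [dif_neg h, dif_pos h']
        exact ((hc _ _).mp h'.choose_spec).symm
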